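/- arXiv:1810.06363 — 2 statements merged into one kernel-verified Lean document; each statement's English description precedes it below -/
import Mathlib

section
/- (Brinck) Let J be a compact interval of length l > 0 and let f ∈ H¹(J). Then for every x ∈ J and every t with 0 < t ≤ l one has (1/2)·l⁻¹·‖f‖²_{L²(J)} − (1/2)·l·‖f'‖²_{L²(J)} ≤ |f(x)|² ≤ 2t⁻¹·‖f‖²_{L²(J)} + t·‖f'‖²_{L²(J)}; moreover inf_{x ∈ J} |f(x)|² ≤ l⁻¹·‖f‖²_{L²(J)}. -/
open MeasureTheory Set Filter
open scoped ComplexConjugate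

noncomputable section

/-- A right-continuous, locally BV function `q : ℝ → ℝ`, presented via a Jordan
decomposition `q = pos - neg` as a difference of two monotone right-continuous
(Stieltjes) functions.  The associated Lebesgue–Stieltjes signed measure `dq`
is realized set-wise as the difference of the two Stieltjes measures. -/
structure SignedStieltjes where
  pos : StieltjesFunction ℝ
  neg : StieltjesFunction ℝ

namespace SignedStieltjes

/-- The underlying right-continuous locally BV function `q`. -/
def q (σ : SignedStieltjes) : ℝ → ℝ := fun x => σ.pos x - σ.neg x

/-- `dq s`, the Lebesgue–Stieltjes signed measure of a (bounded) set `s`;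
one has `dq (a,b] = q b - q a`. -/
def meas (σ : SignedStieltjes) (s : Set ℝ) : ℝ :=
  (σ.pos.measure s).toReal - (σ.neg.measure s).toReal

/-- `∫_s f dq` : the integral of a real-valued function over `s` against `dq`. -/
def integ (σ : SignedStieltjes) (s : Set ℝ) (f : ℝ → ℝ) : ℝ :=
  (∫ x in s, f x ∂σ.pos.measure) - (∫ x in s, f x ∂σ.neg.measure)

/-- `∫_s f dq` for complex-valued `f`. -/
def cinteg (σ : SignedStieltjes) (s : Set ℝ) (f : ℝ → ℂ) : ℂ :=
  (∫ x in s, f x ∂σ.pos.measure) - (∫ x in s, f x ∂σ.neg.measure)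

/-- The Brinck condition `(Br)`: `dq J ≥ -C` for every interval `J` of length `≤ 1`. -/
def Brinck (σ : SignedStieltjes) (C : ℝ) : Prop :=
  ∀ J : Set ℝ, J.OrdConnected → Bornology.IsBounded J → Metric.diam J ≤ 1 →
    -C ≤ σ.meas J

end SignedStieltjes

/-- `f` is (locally) absolutely continuous on `s` with a.e. derivative `f'`:
the fundamental theorem of calculus holds between any two points of `s`. -/
def IsACOn (f f' : ℝ → ℂ) (s : Set ℝ) : Prop :=
  ∀ a ∈ s, ∀ b ∈ s, IntervalIntegrable f' volume a b ∧
    f b - f a = ∫ x in a..b, f' x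

/-- `f ∈ H¹(s)` (with derivative `f'`): `f` is locally absolutely continuous on `s`
with derivative `f'`, and both `f` and `f'` belong to `L²(s)`. -/
def IsH1On (f f' : ℝ → ℂ) (s : Set ℝ) : Prop :=
  IsACOn f f' s ∧ MemLp f 2 (volume.restrict s) ∧ MemLp f' 2 (volume.restrict s)

namespace SignedStieltjes

/-- The quasi-differential expression `l_q[u] = -(u^{[1]})' - q·u^{[1]} - q²·u`, where
`u'` is the derivative of `u` and `w` is the derivative of the quasi-derivative
`u^{[1]} = u' - q·u`. -/
def lq (σ : SignedStieltjes) (u u' w : ℝ → ℂ) : ℝ → ℂ := fun x =>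
  -w x - (σ.q x : ℂ) * (u' x - (σ.q x : ℂ) * u x) - (σ.q x : ℂ) ^ 2 * u x

/-- `u` belongs to `Dom(S(q))`, the domain of the maximal operator: `u ∈ L²(ℝ)`,
`u` is locally absolutely continuous with derivative `u'`, the quasi-derivative
`u^{[1]} = u' - q·u` is locally absolutely continuous with derivative `w`, and
`l_q[u] ∈ L²(ℝ)`. -/
def InDomS (σ : SignedStieltjes) (u u' w : ℝ → ℂ) : Prop :=
  IsACOn u u' univ ∧
  IsACOn (fun x => u' x - (σ.q x : ℂ) * u x) w univ ∧
  MemLp u 2 (volume : Measure ℝ) ∧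
  MemLp (σ.lq u u' w) 2 (volume : Measure ℝ)

/-- The inner product `⟨f,g⟩ = ∫_ℝ f'·conj(g') dx + ∫_ℝ f·conj(g) dp`, where
`p x = q x + (2C²+1)x`, i.e. `dp = dq + (2C²+1)·(Lebesgue)`. -/
def brinner (σ : SignedStieltjes) (C : ℝ) (f f' g g' : ℝ → ℂ) : ℂ :=
  (∫ x, f' x * conj (g' x)) + σ.cinteg univ (fun x => f x * conj (g x)) +
    (2 * C ^ 2 + 1) * ∫ x, f x * conj (g x)

end SignedStieltjes

end

/-
With `A = ∫_J |f|²` and `B = ∫_J |f'|²`, the fundamental theorem of calculus and Cauchy–Schwarz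
give `|f x|² ≤ 2 |f y|² + 2 |x - y| B` for all `x, y ∈ J`. Integrating this in `y` over `J`
with the roles of `x` and `y` exchanged, and using `∫_J |x - y| dy ≤ l² / 2`, gives the lower
bound; integrating it over a subinterval of length `t` containing `x` gives the upper bound.
The bound on the infimum is `l · inf_J |f|² ≤ A`.
-/

theorem sq_integral_norm_le_measureReal_mul {α E : Type*} [MeasurableSpace α] {μ : Measure α}
    [IsFiniteMeasure μ] [NormedAddCommGroup E] {g : α → E} (hg : MemLp g 2 μ) :
    (∫ a, ‖g a‖ ∂μ) ^ 2 ≤ μ.real univ * ∫ a, ‖g a‖ ^ 2 ∂μ := by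
  have holder := integral_mul_norm_le_Lp_mul_Lq Real.HolderConjugate.two_two
    (by rw [ENNReal.ofReal_ofNat]; exact hg.norm) (memLp_const (1 : ℝ)) (μ := μ)
  simp only [norm_norm, norm_one, mul_one, integral_const, smul_eq_mul,
    Real.rpow_two, ← Real.sqrt_eq_rpow] at holder
  calc (∫ a, ‖g a‖ ∂μ) ^ 2 ≤ (√(∫ a, ‖g a‖ ^ 2 ∂μ) * √(μ.real univ)) ^ 2 := by
        gcongr
        simpa using holder
    _ = μ.real univ * ∫ a, ‖g a‖ ^ 2 ∂μ := by
        rw [mul_pow, Real.sq_sqrt (integral_nonneg fun _ => by positivity),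
          Real.sq_sqrt measureReal_nonneg, mul_comm]

theorem setIntegral_Icc_abs_sub_le {c d x : ℝ} (hcx : c ≤ x) (hxd : x ≤ d) :
    ∫ y in Icc c d, |x - y| ≤ (d - c) ^ 2 / 2 := by
  have hint (u v : ℝ) : IntervalIntegrable (fun y => |x - y|) volume u v :=
    (continuous_const.sub continuous_id).abs.intervalIntegrable u v
  have left : ∫ y in c..x, |x - y| = (x - c) ^ 2 / 2 := by
    rw [intervalIntegral.integral_congr (g := fun y => x - y) fun y hy => by
        rw [uIcc_of_le hcx] at hy; exact abs_of_nonneg (sub_nonneg.2 hy.2),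
      intervalIntegral.integral_sub intervalIntegrable_const intervalIntegral.intervalIntegrable_id,
      intervalIntegral.integral_const, integral_id, smul_eq_mul]
    ring
  have right : ∫ y in x..d, |x - y| = (d - x) ^ 2 / 2 := by
    rw [intervalIntegral.integral_congr (g := fun y => y - x) fun y hy => by
        rw [uIcc_of_le hxd] at hy; exact abs_of_nonpos (sub_nonpos.2 hy.1) |>.trans (neg_sub _ _),
      intervalIntegral.integral_sub intervalIntegral.intervalIntegrable_id intervalIntegrable_const,
      intervalIntegral.integral_const, integral_id, smul_eq_mul]
    ring
  rw [integral_Icc_eq_integral_Ioc, ← intervalIntegral.integral_of_le (hcx.trans hxd),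
    ← intervalIntegral.integral_add_adjacent_intervals (hint c x) (hint x d), left, right]
  nlinarith [mul_nonneg (sub_nonneg.2 hcx) (sub_nonneg.2 hxd)]

theorem setIntegral_Icc_le_of_le_add_abs_sub {u v : ℝ → ℝ} {c d x K : ℝ} (hcx : c ≤ x)
    (hxd : x ≤ d) (hK : 0 ≤ K) (hu : IntegrableOn u (Icc c d)) (hv : IntegrableOn v (Icc c d))
    (h : ∀ y ∈ Icc c d, u y ≤ v y + 2 * |x - y| * K) :
    ∫ y in Icc c d, u y ≤ (∫ y in Icc c d, v y) + (d - c) ^ 2 * K := by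
  have habs : IntegrableOn (fun y => 2 * |x - y| * K) (Icc c d) :=
    ((continuous_const.mul (continuous_const.sub continuous_id).abs).mul
      continuous_const).integrableOn_Icc
  calc ∫ y in Icc c d, u y ≤ ∫ y in Icc c d, (v y + 2 * |x - y| * K) :=
        setIntegral_mono_on hu (hv.add habs) measurableSet_Icc h
    _ = (∫ y in Icc c d, v y) + 2 * (∫ y in Icc c d, |x - y|) * K := by
        rw [integral_add hv habs, integral_mul_const, integral_const_mul]
    _ ≤ (∫ y in Icc c d, v y) + (d - c) ^ 2 * K := by
        nlinarith [setIntegral_Icc_abs_sub_le hcx hxd]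

theorem measureReal_mul_sInf_image_le_setIntegral {α : Type*} [MeasurableSpace α]
    {μ : Measure α} {s : Set α} {g : α → ℝ} (hs : MeasurableSet s) (hμs : μ s ≠ ⊤)
    (hbdd : BddBelow (g '' s)) (hg : IntegrableOn g s μ) :
    μ.real s * sInf (g '' s) ≤ ∫ x in s, g x ∂μ := by
  have h := setIntegral_mono_on (integrableOn_const hμs) hg hs
    fun x hx => csInf_le hbdd (mem_image_of_mem g hx)
  rwa [setIntegral_const, smul_eq_mul] at h

theorem exists_mem_Icc_add_subset_Icc {a b x t : ℝ} (hx : x ∈ Icc a b) (ht₀ : 0 ≤ t)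
    (ht : t ≤ b - a) :
    ∃ c, a ≤ c ∧ c + t ≤ b ∧ x ∈ Icc c (c + t) := by
  refine ⟨min x (b - t), le_min hx.1 (by linarith), ?_, min_le_left _ _, ?_⟩
  · linarith [min_le_right x (b - t)]
  · have : x - t ≤ min x (b - t) := le_min (by linarith) (by linarith [hx.2])
    linarith

open scoped Interval

namespace IsACOn

variable {f f' : ℝ → ℂ} {s : Set ℝ} {x y : ℝ}

theorem norm_le_add_integral_norm (hf : IsACOn f f' s) (hx : x ∈ s) (hy : y ∈ s) :
    ‖f x‖ ≤ ‖f y‖ + ∫ z in Ι y x, ‖f' z‖ :=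
  calc ‖f x‖ = ‖f y + ∫ z in y..x, f' z‖ := by rw [← (hf y hy x hx).2, add_sub_cancel]
    _ ≤ ‖f y‖ + ∫ z in Ι y x, ‖f' z‖ :=
        (norm_add_le _ _).trans (by
          gcongr; exact intervalIntegral.norm_integral_le_integral_norm_uIoc)

theorem norm_sq_le (hs : s.OrdConnected) (hf : IsACOn f f' s)
    (hf' : MemLp f' 2 (volume.restrict s)) (hx : x ∈ s) (hy : y ∈ s) :
    ‖f x‖ ^ 2 ≤ 2 * ‖f y‖ ^ 2 + 2 * |x - y| * ∫ z in s, ‖f' z‖ ^ 2 := by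
  have hsub : Ι y x ⊆ s := hs.uIoc_subset hy hx
  have hf'i : IntegrableOn (fun z => ‖f' z‖ ^ 2) s := hf'.integrable_norm_pow two_ne_zero
  have : IsFiniteMeasure (volume.restrict (Ι y x)) :=
    isFiniteMeasure_restrict.2 (by simp)
  have cauchy_schwarz : (∫ z in Ι y x, ‖f' z‖) ^ 2 ≤ |x - y| * ∫ z in s, ‖f' z‖ ^ 2 :=
    calc (∫ z in Ι y x, ‖f' z‖) ^ 2 ≤ |x - y| * ∫ z in Ι y x, ‖f' z‖ ^ 2 := by
          simpa [measureReal_restrict_apply_univ, Measure.real, Real.volume_uIoc, abs_sub_comm]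
            using sq_integral_norm_le_measureReal_mul
              (hf'.mono_measure (Measure.restrict_mono hsub le_rfl))
      _ ≤ |x - y| * ∫ z in s, ‖f' z‖ ^ 2 :=
          mul_le_mul_of_nonneg_left (setIntegral_mono_set hf'i
            (.of_forall fun _ => by positivity) hsub.eventuallyLE) (abs_nonneg _)
  calc ‖f x‖ ^ 2 ≤ (‖f y‖ + ∫ z in Ι y x, ‖f' z‖) ^ 2 := by
        gcongr
        exact hf.norm_le_add_integral_norm hx hy
    _ ≤ 2 * (‖f y‖ ^ 2 + (∫ z in Ι y x, ‖f' z‖) ^ 2) := add_sq_le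
    _ ≤ 2 * ‖f y‖ ^ 2 + 2 * |x - y| * ∫ z in s, ‖f' z‖ ^ 2 := by linarith

end IsACOn

namespace IsH1On

variable {f f' : ℝ → ℂ} {s : Set ℝ} {c d x : ℝ}

theorem setIntegral_Icc_norm_sq_le (hs : s.OrdConnected) (hf : IsH1On f f' s)
    (hcd : Icc c d ⊆ s) (hx : x ∈ Icc c d) :
    ∫ y in Icc c d, ‖f y‖ ^ 2 ≤ 2 * (d - c) * ‖f x‖ ^ 2 + (d - c) ^ 2 * ∫ y in s, ‖f' y‖ ^ 2 := by
  have hfi : IntegrableOn (fun y => ‖f y‖ ^ 2) s := hf.2.1.integrable_norm_pow two_ne_zero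
  have h := setIntegral_Icc_le_of_le_add_abs_sub hx.1 hx.2 (integral_nonneg fun _ => by positivity)
    (hfi.mono_set hcd) (integrableOn_const (C := 2 * ‖f x‖ ^ 2) measure_Icc_lt_top.ne)
    fun y hy => abs_sub_comm x y ▸ hf.1.norm_sq_le hs hf.2.2 (hcd hy) (hcd hx)
  rwa [setIntegral_const, Real.volume_real_Icc_of_le (hx.1.trans hx.2), smul_eq_mul,
    ← mul_assoc, mul_comm (d - c)] at h

theorem mul_norm_sq_le (hs : s.OrdConnected) (hf : IsH1On f f' s)
    (hcd : Icc c d ⊆ s) (hx : x ∈ Icc c d) :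
    (d - c) * ‖f x‖ ^ 2 ≤ 2 * (∫ y in s, ‖f y‖ ^ 2) + (d - c) ^ 2 * ∫ y in s, ‖f' y‖ ^ 2 := by
  have hfi : IntegrableOn (fun y => ‖f y‖ ^ 2) s := hf.2.1.integrable_norm_pow two_ne_zero
  have h := setIntegral_Icc_le_of_le_add_abs_sub hx.1 hx.2 (integral_nonneg fun _ => by positivity)
    (integrableOn_const (C := ‖f x‖ ^ 2) measure_Icc_lt_top.ne) ((hfi.mono_set hcd).const_mul 2)
    fun y hy => hf.1.norm_sq_le hs hf.2.2 (hcd hx) (hcd hy)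
  rw [setIntegral_const, integral_const_mul, Real.volume_real_Icc_of_le (hx.1.trans hx.2),
    smul_eq_mul] at h
  have hmono : ∫ y in Icc c d, ‖f y‖ ^ 2 ≤ ∫ y in s, ‖f y‖ ^ 2 :=
    setIntegral_mono_set hfi (.of_forall fun _ => by positivity) hcd.eventuallyLE
  linarith

end IsH1On

/-- **Brinck.** For a compact interval `J = [a,b]` of length
`l = b - a > 0` and `f ∈ H¹(J)`: for all `x ∈ J` and `0 < t ≤ l`,
`(1/2)l⁻¹‖f‖² - (1/2)l‖f'‖² ≤ |f(x)|² ≤ 2t⁻¹‖f‖² + t‖f'‖²`, and moreover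
`inf_{x∈J} |f(x)|² ≤ l⁻¹‖f‖²`. -/
theorem brinck_pointwise_bounds (a b : ℝ) (hab : a < b)
    (f f' : ℝ → ℂ) (hf : IsH1On f f' (Icc a b)) :
    (∀ x ∈ Icc a b, ∀ t : ℝ, 0 < t → t ≤ b - a →
      (1 / 2) * (b - a)⁻¹ * (∫ y in Icc a b, ‖f y‖ ^ 2) -
          (1 / 2) * (b - a) * (∫ y in Icc a b, ‖f' y‖ ^ 2) ≤ ‖f x‖ ^ 2 ∧
      ‖f x‖ ^ 2 ≤ 2 * t⁻¹ * (∫ y in Icc a b, ‖f y‖ ^ 2) +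
          t * ∫ y in Icc a b, ‖f' y‖ ^ 2) ∧
    sInf ((fun x => ‖f x‖ ^ 2) '' Icc a b) ≤ (b - a)⁻¹ * ∫ y in Icc a b, ‖f y‖ ^ 2 := by
  have hl : 0 < b - a := sub_pos.2 hab
  set A := ∫ y in Icc a b, ‖f y‖ ^ 2
  set B := ∫ y in Icc a b, ‖f' y‖ ^ 2
  refine ⟨fun x hx t ht htl => ⟨?_, ?_⟩, ?_⟩
  · have h := hf.setIntegral_Icc_norm_sq_le ordConnected_Icc subset_rfl hx
    calc 1 / 2 * (b - a)⁻¹ * A - 1 / 2 * (b - a) * B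
        ≤ 1 / 2 * (b - a)⁻¹ * (2 * (b - a) * ‖f x‖ ^ 2 + (b - a) ^ 2 * B)
            - 1 / 2 * (b - a) * B := by gcongr
      _ = ‖f x‖ ^ 2 := by field_simp; ring
  · obtain ⟨c, hac, hcb, hxc⟩ := exists_mem_Icc_add_subset_Icc hx ht.le htl
    have h := hf.mul_norm_sq_le ordConnected_Icc (Icc_subset_Icc hac hcb) hxc
    rw [add_sub_cancel_left] at h
    calc ‖f x‖ ^ 2 ≤ (2 * A + t ^ 2 * B) / t := by rw [le_div_iff₀ ht]; linarith
      _ = 2 * t⁻¹ * A + t * B := by field_simp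
  · have h := measureReal_mul_sInf_image_le_setIntegral measurableSet_Icc measure_Icc_lt_top.ne
      ⟨0, by rintro _ ⟨y, -, rfl⟩; positivity⟩ (hf.2.1.integrable_norm_pow two_ne_zero)
    rwa [Real.volume_real_Icc_of_le hab.le, ← le_inv_mul_iff₀ hl] at h
end

section
/- Assume q satisfies the Brinck condition (Br) with constant C ≥ 2. Then for every u ∈ H¹(ℝ) with compact support and every h ∈ (0,1]: ∫_ℝ |u|² dq ≥ −C·( 2h⁻¹·‖u‖²_{L²(ℝ)} + h·‖u'‖²_{L²(ℝ)} ). -/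
open MeasureTheory Set Filter
open scoped ComplexConjugate

/-!
With `φ = ‖u‖²` and `ψ = 2 Re (ū u') = φ'`, both supported in a compact interval `(a, b]`,
integration by parts against `dq` gives `∫ φ dq = -∫ q ψ`. Chaining `(Br)` over unit intervals
shows that `g = q + C x` satisfies `g s ≤ g t + C` for `s ≤ t`, so `g` lies between a monotone
function `G` and `G + C`. Splitting `q = (g - G) + G - C x`: the monotone part gives
`-∫ G ψ = ∫ φ dG ≥ 0`, the bounded part gives `|∫ (g - G) ψ| ≤ C ∫ |ψ|`, and `-∫ x ψ = ∫ φ`.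
Hence `∫ φ dq ≥ -C (∫ |ψ| + ∫ φ)`, and `|ψ| ≤ h⁻¹ ‖u‖² + h ‖u'‖²` together with `1 ≤ h⁻¹`
finishes the proof.
-/
theorem setIntegral_mul_integral_Ioc_eq_integral_Ioo_mul {𝕜 : Type*} [RCLike 𝕜] {μ : Measure ℝ}
    [IsLocallyFiniteMeasure μ] {a b : ℝ} {f g : ℝ → 𝕜}
    (hf : IntegrableOn f (Ioc a b) μ) (hg : IntegrableOn g (Ioc a b)) :
    ∫ x in Ioc a b, f x * (∫ t in Ioc x b, g t) ∂μ
      = ∫ t in Ioc a b, (∫ x in Ioo a t, f x ∂μ) * g t := by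
  have : IsFiniteMeasure (μ.restrict (Ioc a b)) :=
    isFiniteMeasure_restrict.2 measure_Ioc_lt_top.ne
  have : IsFiniteMeasure (volume.restrict (Ioc a b)) :=
    isFiniteMeasure_restrict.2 measure_Ioc_lt_top.ne
  have hint : Integrable (Function.uncurry fun x t => (Ioi x).indicator (fun t => f x * g t) t)
      ((μ.restrict (Ioc a b)).prod (volume.restrict (Ioc a b))) :=
    (hf.mul_prod hg).indicator (measurableSet_lt measurable_fst measurable_snd)
  calc ∫ x in Ioc a b, f x * (∫ t in Ioc x b, g t) ∂μ
      = ∫ x in Ioc a b, (∫ t in Ioc a b, (Ioi x).indicator (fun t => f x * g t) t) ∂μ :=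
        setIntegral_congr_fun measurableSet_Ioc fun x hx => by
          rw [setIntegral_indicator measurableSet_Ioi, integral_const_mul,
            Ioc_inter_Ioi, max_eq_right hx.1.le]
    _ = ∫ t in Ioc a b, ∫ x in Ioc a b, (Ioi x).indicator (fun t => f x * g t) t ∂μ :=
        integral_integral_swap hint
    _ = ∫ t in Ioc a b, (∫ x in Ioo a t, f x ∂μ) * g t :=
        setIntegral_congr_fun measurableSet_Ioc fun t ht => by
          have hset : Ioc a b ∩ Iio t = Ioo a t :=
            Set.ext fun x => ⟨fun h => ⟨h.1.1, h.2⟩, fun h => ⟨⟨h.1, h.2.le.trans ht.2⟩, h.2⟩⟩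
          simp only [indicator_apply, mem_Ioi, ← mem_Iio (b := t)]
          rw [← integral_mul_const, ← hset, ← setIntegral_indicator measurableSet_Iio]
          rfl

section IntegrationByParts

variable {a b : ℝ} {ψ : ℝ → ℝ}

theorem Monotone.ae_continuousAt {f : ℝ → ℝ} (hf : Monotone f) : ∀ᵐ x, ContinuousAt f x := by
  filter_upwards [hf.countable_not_continuousAt.ae_notMem volume] with x hx using not_not.1 hx

theorem Monotone.integrableOn_mul {F : ℝ → ℝ} (hF : Monotone F) (hψ : IntegrableOn ψ (Ioc a b)) :
    IntegrableOn (fun t => F t * ψ t) (Ioc a b) :=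
  hψ.bdd_mul hF.measurable.aestronglyMeasurable <|
    ae_restrict_of_forall_mem measurableSet_Ioc fun _ ht =>
      abs_le_max_abs_abs (hF ht.1.le) (hF ht.2)

theorem StieltjesFunction.setIntegral_Ioc_eq_neg_integral_mul (F : StieltjesFunction ℝ)
    {φ : ℝ → ℝ} (hψ : IntegrableOn ψ (Ioc a b)) (hψ0 : ∫ t in Ioc a b, ψ t = 0)
    (hφ : ∀ x ∈ Ioc a b, φ x = -∫ t in Ioc x b, ψ t) :
    ∫ x in Ioc a b, φ x ∂F.measure = -∫ t in Ioc a b, F t * ψ t := by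
  have hleft : ∀ᵐ t ∂volume.restrict (Ioc a b),
      (∫ _ in Ioo a t, (1 : ℝ) ∂F.measure) * ψ t = (F t - F a) * ψ t := by
    filter_upwards [ae_restrict_of_ae F.mono.ae_continuousAt, ae_restrict_mem measurableSet_Ioc]
      with t hcont ht
    rw [setIntegral_const, smul_eq_mul, mul_one, measureReal_def, F.measure_Ioo,
      hcont.continuousWithinAt.leftLim_eq, ENNReal.toReal_ofReal (sub_nonneg.2 (F.mono ht.1.le))]
  calc ∫ x in Ioc a b, φ x ∂F.measure
      = -∫ x in Ioc a b, 1 * (∫ t in Ioc x b, ψ t) ∂F.measure := by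
        rw [← integral_neg]
        exact setIntegral_congr_fun measurableSet_Ioc fun x hx => by simp [hφ x hx]
    _ = -∫ t in Ioc a b, (F t - F a) * ψ t := by
        rw [setIntegral_mul_integral_Ioc_eq_integral_Ioo_mul
          (integrableOn_const measure_Ioc_lt_top.ne) hψ, integral_congr_ae hleft]
    _ = -∫ t in Ioc a b, F t * ψ t := by
        simp only [sub_mul]
        rw [integral_sub (F.mono.integrableOn_mul hψ) (hψ.const_mul _), integral_const_mul, hψ0,
          mul_zero, sub_zero]

theorem Monotone.setIntegral_Ioc_mul_nonpos {G φ : ℝ → ℝ} (hG : Monotone G)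
    (hψ : IntegrableOn ψ (Ioc a b)) (hψ0 : ∫ t in Ioc a b, ψ t = 0)
    (hφ : ∀ x ∈ Ioc a b, φ x = -∫ t in Ioc x b, ψ t) (hφ_nonneg : ∀ x ∈ Ioc a b, 0 ≤ φ x) :
    ∫ t in Ioc a b, G t * ψ t ≤ 0 := by
  have hG_ae : ∀ᵐ t ∂volume.restrict (Ioc a b), G t * ψ t = hG.stieltjesFunction t * ψ t := by
    filter_upwards [ae_restrict_of_ae hG.ae_continuousAt] with t hcont
    rw [hG.stieltjesFunction_eq, hcont.continuousWithinAt.rightLim_eq]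
  rw [integral_congr_ae hG_ae, ← neg_nonneg,
    ← hG.stieltjesFunction.setIntegral_Ioc_eq_neg_integral_mul hψ hψ0 hφ]
  exact setIntegral_nonneg measurableSet_Ioc hφ_nonneg

end IntegrationByParts

theorem exists_monotone_le_le_add {α : Type*} [Preorder α] {g : α → ℝ} {C : ℝ}
    (hg : ∀ s t, s ≤ t → g s ≤ g t + C) :
    ∃ G : α → ℝ, Monotone G ∧ ∀ t, G t ≤ g t ∧ g t ≤ G t + C := by
  have hlb : ∀ t, ∀ y ∈ g '' Ici t, g t - C ≤ y := by
    rintro t _ ⟨s, hs, rfl⟩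
    linarith [hg t s hs]
  refine ⟨fun t => sInf (g '' Ici t), fun s t hst => ?_, fun t => ⟨?_, ?_⟩⟩
  · exact csInf_le_csInf ⟨_, hlb s⟩ (nonempty_Ici.image g) (image_mono (Ici_subset_Ici.2 hst))
  · exact csInf_le ⟨_, hlb t⟩ (mem_image_of_mem g self_mem_Ici)
  · linarith [le_csInf (nonempty_Ici.image g) (hlb t)]

namespace SignedStieltjes

variable {σ : SignedStieltjes} {C : ℝ}

theorem meas_Ioc (σ : SignedStieltjes) {s t : ℝ} (hst : s ≤ t) :
    σ.meas (Ioc s t) = σ.q t - σ.q s := by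
  rw [meas, σ.pos.measure_Ioc, σ.neg.measure_Ioc,
    ENNReal.toReal_ofReal (sub_nonneg.2 (σ.pos.mono hst)),
    ENNReal.toReal_ofReal (sub_nonneg.2 (σ.neg.mono hst)), q, q]
  ring

theorem Brinck.nonneg (hBr : σ.Brinck C) : 0 ≤ C := by
  simpa [meas] using hBr ∅ ordConnected_empty Bornology.isBounded_empty (by simp)

theorem Brinck.neg_le_sub (hBr : σ.Brinck C) {s t : ℝ} (hst : s ≤ t) (hts : t ≤ s + 1) :
    -C ≤ σ.q t - σ.q s := by
  rw [← σ.meas_Ioc hst]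
  exact hBr _ ordConnected_Ioc (Metric.isBounded_Ioc s t) (by rw [Real.diam_Ioc hst]; linarith)

theorem Brinck.neg_mul_le_sub (hBr : σ.Brinck C) (n : ℕ) {s t : ℝ} (hst : s ≤ t)
    (hts : t ≤ s + n) : -(C * n) ≤ σ.q t - σ.q s := by
  induction n generalizing t with
  | zero => simp [le_antisymm (by simpa using hts) hst]
  | succ n ih =>
    have hm := ih (le_max_left s (t - 1))
      (by push_cast at hts; exact max_le (by simp) (by linarith))
    have := hBr.neg_le_sub (s := max s (t - 1)) (max_le hst (by linarith))
      (by linarith [le_max_right s (t - 1)])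
    push_cast
    linarith

theorem Brinck.sub_le_add (hBr : σ.Brinck C) {s t : ℝ} (hst : s ≤ t) :
    σ.q s + C * s ≤ σ.q t + C * t + C := by
  have hn := hBr.neg_mul_le_sub ⌈t - s⌉₊ hst (by linarith [Nat.le_ceil (t - s)])
  have := mul_le_mul_of_nonneg_left (Nat.ceil_lt_add_one (sub_nonneg.2 hst)).le hBr.nonneg
  linarith

variable {a b : ℝ} {φ ψ : ℝ → ℝ}

theorem integrableOn_q_mul (σ : SignedStieltjes) (hψ : IntegrableOn ψ (Ioc a b)) :
    IntegrableOn (fun t => σ.q t * ψ t) (Ioc a b) := by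
  simpa only [q, sub_mul] using
    (σ.pos.mono.integrableOn_mul hψ).fun_sub (σ.neg.mono.integrableOn_mul hψ)

theorem integ_univ_eq_neg_setIntegral_q_mul (σ : SignedStieltjes)
    (hψ : IntegrableOn ψ (Ioc a b)) (hψ0 : ∫ t in Ioc a b, ψ t = 0)
    (hφ : ∀ x ∈ Ioc a b, φ x = -∫ t in Ioc x b, ψ t) (hφ_supp : ∀ x ∉ Ioc a b, φ x = 0) :
    σ.integ univ φ = -∫ t in Ioc a b, σ.q t * ψ t := by
  rw [integ, Measure.restrict_univ, Measure.restrict_univ,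
    ← setIntegral_eq_integral_of_forall_compl_eq_zero (μ := σ.pos.measure) hφ_supp,
    ← setIntegral_eq_integral_of_forall_compl_eq_zero (μ := σ.neg.measure) hφ_supp,
    σ.pos.setIntegral_Ioc_eq_neg_integral_mul hψ hψ0 hφ,
    σ.neg.setIntegral_Ioc_eq_neg_integral_mul hψ hψ0 hφ]
  simp only [q, sub_mul]
  rw [integral_sub (σ.pos.mono.integrableOn_mul hψ) (σ.neg.mono.integrableOn_mul hψ)]
  ring

theorem Brinck.neg_mul_le_integ (hBr : σ.Brinck C)
    (hψ : IntegrableOn ψ (Ioc a b)) (hψ0 : ∫ t in Ioc a b, ψ t = 0)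
    (hφ : ∀ x ∈ Ioc a b, φ x = -∫ t in Ioc x b, ψ t) (hφ_nonneg : ∀ x, 0 ≤ φ x)
    (hφ_supp : ∀ x ∉ Ioc a b, φ x = 0) :
    -C * ((∫ t in Ioc a b, |ψ t|) + ∫ t in Ioc a b, φ t) ≤ σ.integ univ φ := by
  obtain ⟨G, hG, hGg⟩ := exists_monotone_le_le_add
    (g := fun t => σ.q t + C * t) fun s t hst => hBr.sub_le_add hst
  have hqψ := σ.integrableOn_q_mul hψ
  have hxψ : IntegrableOn (fun t => t * ψ t) (Ioc a b) := monotone_id.integrableOn_mul hψ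
  have hGψ := hG.integrableOn_mul hψ
  have hid : ∫ t in Ioc a b, t * ψ t = -∫ t in Ioc a b, φ t := by
    have := StieltjesFunction.id.setIntegral_Ioc_eq_neg_integral_mul hψ hψ0 hφ
    rw [← Real.volume_eq_stieltjes_id] at this
    simp only [StieltjesFunction.id_apply, id] at this
    linarith
  have hGneg : ∫ t in Ioc a b, G t * ψ t ≤ 0 :=
    hG.setIntegral_Ioc_mul_nonpos hψ hψ0 hφ fun x _ => hφ_nonneg x
  have hgG : ∫ t in Ioc a b, (σ.q t + C * t - G t) * ψ t ≤ C * ∫ t in Ioc a b, |ψ t| := by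
    have hbound : ∀ t, ‖(σ.q t + C * t - G t) * ψ t‖ ≤ C * |ψ t| := fun t => by
      rw [norm_mul, Real.norm_eq_abs, Real.norm_eq_abs, abs_of_nonneg (by linarith [hGg t])]
      exact mul_le_mul_of_nonneg_right (by linarith [hGg t]) (abs_nonneg _)
    rw [← integral_const_mul]
    exact (le_abs_self _).trans <| Real.norm_eq_abs _ ▸
      norm_integral_le_of_norm_le (hψ.abs.const_mul C) (Eventually.of_forall hbound)
  have hsplit : ∫ t in Ioc a b, (σ.q t + C * t - G t) * ψ t
      = (∫ t in Ioc a b, σ.q t * ψ t) + C * (∫ t in Ioc a b, t * ψ t)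
        - ∫ t in Ioc a b, G t * ψ t := by
    rw [← integral_const_mul, ← integral_add hqψ (hxψ.const_mul C),
      ← integral_sub (hqψ.fun_add (hxψ.const_mul C)) hGψ]
    congr 1 with t
    ring
  rw [σ.integ_univ_eq_neg_setIntegral_q_mul hψ hψ0 hφ hφ_supp]
  rw [hid] at hsplit
  linarith

end SignedStieltjes

section AbsolutelyContinuous

variable {u u' : ℝ → ℂ} {x y : ℝ}

theorem IsACOn.mono {s t : Set ℝ} (hu : IsACOn u u' t) (hst : s ⊆ t) : IsACOn u u' s :=
  fun a ha b hb => hu a (hst ha) b (hst hb)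

theorem IsACOn.continuousOn (hu : IsACOn u u' (Icc x y)) : ContinuousOn u (Icc x y) := by
  rcases lt_or_ge y x with hyx | hxy
  · simp [Icc_eq_empty_of_lt hyx]
  have hx : x ∈ Icc x y := left_mem_Icc.2 hxy
  have hprim := intervalIntegral.continuousOn_primitive_interval'
    (hu x hx y (right_mem_Icc.2 hxy)).1 (left_mem_uIcc (a := x) (b := y))
  rw [uIcc_of_le hxy] at hprim
  exact ((continuousOn_const (c := u x)).add hprim).congr fun t ht => by simp [← (hu x hx t ht).2]

theorem IsACOn.integrableOn_Ioc (hu : IsACOn u u' (Icc x y)) (hxy : x ≤ y) :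
    IntegrableOn u' (Ioc x y) :=
  (intervalIntegrable_iff_integrableOn_Ioc_of_le hxy).1
    (hu x (left_mem_Icc.2 hxy) y (right_mem_Icc.2 hxy)).1

theorem IsACOn.integrableOn_conj_mul (hu : IsACOn u u' (Icc x y)) (hxy : x ≤ y) :
    IntegrableOn (fun t => conj (u t) * u' t) (Ioc x y) :=
  IntegrableOn.continuousOn_mul_of_subset
    (Complex.continuous_conj.comp_continuousOn hu.continuousOn) (hu.integrableOn_Ioc hxy)
    isCompact_Icc measurableSet_Ioc Ioc_subset_Icc_self

theorem IsACOn.norm_sq_sub_norm_sq (hu : IsACOn u u' (Icc x y)) (hxy : x ≤ y) :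
    ‖u y‖ ^ 2 - ‖u x‖ ^ 2 = ∫ t in Ioc x y, 2 * (conj (u t) * u' t).re := by
  have hx : x ∈ Icc x y := left_mem_Icc.2 hxy
  have hy : y ∈ Icc x y := right_mem_Icc.2 hxy
  have hprim : ∀ s ∈ Icc x y, ∀ t ∈ Icc x y, s ≤ t → ∫ r in Ioc s t, u' r = u t - u s :=
    fun s hs t ht hst => by rw [← intervalIntegral.integral_of_le hst, (hu s hs t ht).2]
  have hu' := hu.integrableOn_Ioc hxy
  have hu'c : IntegrableOn (fun t => conj (u' t)) (Ioc x y) :=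
    Complex.conjCLE.toContinuousLinearMap.integrable_comp hu'
  have huu' := hu.integrableOn_conj_mul hxy
  have hu'cu : IntegrableOn (fun t => conj (u' t) * u t) (Ioc x y) :=
    hu'c.mul_continuousOn_of_subset hu.continuousOn measurableSet_Ioc isCompact_Icc
      Ioc_subset_Icc_self
  set P := ∫ t in Ioc x y, conj (u t) * u' t
  have hconjP : ∫ t in Ioc x y, conj (u' t) * u t = conj P := by
    rw [← integral_conj]
    simp [mul_comm]
  have hfubini := setIntegral_mul_integral_Ioc_eq_integral_Ioo_mul hu'c hu'
  have hlhs : ∫ s in Ioc x y, conj (u' s) * (∫ t in Ioc s y, u' t)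
      = (conj (u y) - conj (u x)) * u y - conj P := by
    rw [setIntegral_congr_fun measurableSet_Ioc fun s hs => by
      rw [hprim s (Ioc_subset_Icc_self hs) y hy hs.2, mul_sub]]
    rw [integral_sub (hu'c.mul_const _) hu'cu, integral_mul_const, integral_conj,
      hprim x hx y hy hxy, hconjP, map_sub]
  have hrhs : ∫ t in Ioc x y, (∫ s in Ioo x t, conj (u' s)) * u' t
      = P - conj (u x) * (u y - u x) := by
    rw [setIntegral_congr_fun measurableSet_Ioc fun t ht => by
      rw [← integral_Ioc_eq_integral_Ioo, integral_conj,
        hprim x hx t (Ioc_subset_Icc_self ht) ht.1.le, map_sub, sub_mul],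
      integral_sub huu' (hu'.const_mul _), integral_const_mul, hprim x hx y hy hxy]
  have hP : P + conj P = conj (u y) * u y - conj (u x) * u x := by
    linear_combination hlhs - hfubini - hrhs
  have hre := congrArg Complex.re hP
  simp only [Complex.add_re, Complex.conj_re, Complex.sub_re, Complex.conj_mul'] at hre
  have hPre : ∫ t in Ioc x y, (conj (u t) * u' t).re = P.re := integral_re huu'
  rw [integral_const_mul, hPre]
  norm_cast at hre
  linarith

end AbsolutelyContinuous

theorem HasCompactSupport.exists_forall_notMem_Ioo_eq_zero {M : Type*} [Zero M] {f : ℝ → M}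
    (hf : HasCompactSupport f) : ∃ a b, a ≤ b ∧ ∀ x ∉ Ioo a b, f x = 0 := by
  obtain ⟨r, hr⟩ := hf.isCompact.isBounded.subset_closedBall 0
  refine ⟨-(|r| + 1), |r| + 1, by linarith [abs_nonneg r],
    fun x hx => image_eq_zero_of_notMem_tsupport fun hmem => hx ?_⟩
  have := abs_le.1 (by simpa using hr hmem)
  constructor <;> linarith [le_abs_self r]

theorem Complex.abs_two_mul_re_conj_mul_le {h : ℝ} (hh : 0 < h) (z w : ℂ) :
    |2 * (conj z * w).re| ≤ h⁻¹ * ‖z‖ ^ 2 + h * ‖w‖ ^ 2 := by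
  have hre : |(conj z * w).re| ≤ ‖z‖ * ‖w‖ := by
    simpa using Complex.abs_re_le_norm (conj z * w)
  have hsq : 0 ≤ h⁻¹ * (‖z‖ - h * ‖w‖) ^ 2 := by positivity
  have hinv : h⁻¹ * h = 1 := inv_mul_cancel₀ hh.ne'
  rw [abs_mul, abs_two]
  nlinarith

theorem integral_abs_two_mul_re_conj_mul_le {α : Type*} [MeasurableSpace α] {μ : Measure α}
    {u u' : α → ℂ} (hu : MemLp u 2 μ) (hu' : MemLp u' 2 μ) {h : ℝ} (hh : 0 < h) (s : Set α) :
    ∫ t in s, |2 * (conj (u t) * u' t).re| ∂μ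
      ≤ h⁻¹ * ∫ t, ‖u t‖ ^ 2 ∂μ + h * ∫ t, ‖u' t‖ ^ 2 ∂μ := by
  have hu2 := (memLp_two_iff_integrable_sq_norm hu.1).1 hu
  have hu'2 := (memLp_two_iff_integrable_sq_norm hu'.1).1 hu'
  have hbound := (hu2.const_mul h⁻¹).fun_add (hu'2.const_mul h)
  calc ∫ t in s, |2 * (conj (u t) * u' t).re| ∂μ
      ≤ ∫ t in s, h⁻¹ * ‖u t‖ ^ 2 + h * ‖u' t‖ ^ 2 ∂μ :=
        integral_mono_of_nonneg (Eventually.of_forall fun _ => abs_nonneg _) hbound.integrableOn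
          (Eventually.of_forall fun t => Complex.abs_two_mul_re_conj_mul_le hh _ _)
    _ ≤ ∫ t, h⁻¹ * ‖u t‖ ^ 2 + h * ‖u' t‖ ^ 2 ∂μ :=
        setIntegral_le_integral hbound (Eventually.of_forall fun _ => by positivity)
    _ = h⁻¹ * ∫ t, ‖u t‖ ^ 2 ∂μ + h * ∫ t, ‖u' t‖ ^ 2 ∂μ := by
        rw [integral_add (hu2.const_mul _) (hu'2.const_mul _), integral_const_mul,
          integral_const_mul]

theorem lower_bound_compact_support_general (σ : SignedStieltjes) (C : ℝ)
    (hBr : σ.Brinck C) (u u' : ℝ → ℂ) (hu : IsH1On u u' univ)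
    (hsupp : HasCompactSupport u) (h : ℝ) (hh0 : 0 < h) (hh1 : h ≤ 1) :
    -C * (2 * h⁻¹ * (∫ x : ℝ, ‖u x‖ ^ 2) + h * ∫ x : ℝ, ‖u' x‖ ^ 2) ≤
      σ.integ univ (fun x => ‖u x‖ ^ 2) := by
  obtain ⟨hAC, hu2, hu'2⟩ := hu
  rw [Measure.restrict_univ] at hu2 hu'2
  obtain ⟨a, b, hab, hu0⟩ := hsupp.exists_forall_notMem_Ioo_eq_zero
  have hftc : ∀ x y, x ≤ y →
      ‖u y‖ ^ 2 - ‖u x‖ ^ 2 = ∫ t in Ioc x y, 2 * (conj (u t) * u' t).re :=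
    fun x y hxy => (hAC.mono (subset_univ _)).norm_sq_sub_norm_sq hxy
  have hψ : IntegrableOn (fun t => 2 * (conj (u t) * u' t).re) (Ioc a b) :=
    ((hAC.mono (subset_univ _)).integrableOn_conj_mul hab).re.const_mul 2
  have hψ0 : ∫ t in Ioc a b, 2 * (conj (u t) * u' t).re = 0 := by
    rw [← hftc a b hab, hu0 a fun ha => ha.1.false, hu0 b fun hb => hb.2.false]
    simp
  have hφ : ∀ x ∈ Ioc a b, ‖u x‖ ^ 2 = -∫ t in Ioc x b, 2 * (conj (u t) * u' t).re :=
    fun x hx => by rw [← hftc x b hx.2, hu0 b fun hb => hb.2.false]; simp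
  have hφ_supp : ∀ x ∉ Ioc a b, ‖u x‖ ^ 2 = 0 :=
    fun x hx => by simp [hu0 x fun hx' => hx (Ioo_subset_Ioc_self hx')]
  have key := hBr.neg_mul_le_integ hψ hψ0 hφ (fun _ => by positivity) hφ_supp
  rw [setIntegral_eq_integral_of_forall_compl_eq_zero hφ_supp] at key
  have hψ_le := integral_abs_two_mul_re_conj_mul_le hu2 hu'2 hh0 (Ioc a b)
  have hφ_le : ∫ x, ‖u x‖ ^ 2 ≤ h⁻¹ * ∫ x, ‖u x‖ ^ 2 :=
    le_mul_of_one_le_left (integral_nonneg fun _ => by positivity) ((one_le_inv₀ hh0).2 hh1)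
  refine le_trans ?_ key
  rw [neg_mul, neg_mul, neg_le_neg_iff]
  exact mul_le_mul_of_nonneg_left (by linarith) hBr.nonneg

/-- Under the Brinck condition, for every `u ∈ H¹(ℝ)` with
compact support and every `h ∈ (0,1]`:
`∫_ℝ |u|² dq ≥ -C·( 2h⁻¹‖u‖²_{L²(ℝ)} + h‖u'‖²_{L²(ℝ)} )`. -/
theorem lower_bound_compact_support (σ : SignedStieltjes) (C : ℝ) (hC : 2 ≤ C)
    (hBr : σ.Brinck C) (u u' : ℝ → ℂ) (hu : IsH1On u u' univ)
    (hsupp : HasCompactSupport u) (h : ℝ) (hh0 : 0 < h) (hh1 : h ≤ 1) :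
    -C * (2 * h⁻¹ * (∫ x : ℝ, ‖u x‖ ^ 2) + h * ∫ x : ℝ, ‖u' x‖ ^ 2) ≤
      σ.integ univ (fun x => ‖u x‖ ^ 2) :=
  lower_bound_compact_support_general σ C hBr u u' hu hsupp h hh0 hh1
end
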